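/- Let mu be a measure of k-dimensional polynomial growth on R^n, mu(B(x,r)) <= c_mu r^k. Let Q be a cube, x_Q its center, and Q_j = (c_n alpha)^j Q for j >= 0. Suppose alpha > 3, beta > (c_n alpha)^k, and Q_N is the smallest (c_n alpha, beta)-doubling cube among the Q_j with j >= 1 (i.e., mu(c_n alpha Q_j) > beta mu(Q_j) for 1 <= j < N and mu(c_n alpha Q_N) <= beta mu(Q_N)). Then the integral over Q_{N+1} \ Q of |x - x_Q|^{-k} dmu(x) is bounded by a constant (depending only on k, c_n, alpha, beta, c_mu) times mu(Q_N)/l(Q_N)^k, and hence by an absolute constant independent of Q. -/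

import Mathlib

open MeasureTheory

/-- `pn n` is the smallest odd integer strictly greater than `n`. -/
def pn (n : ℕ) : ℕ := if n % 2 = 0 then n + 1 else n + 2

/-- The covering constant `c_n = 2 pₙ √n` of Theorem A. -/
noncomputable def cN (n : ℕ) : ℝ := 2 * pn n * Real.sqrt n

/-- The closed axis-parallel cube of center `x` and side length `l`. -/
def ccube {n : ℕ} (x : EuclideanSpace ℝ (Fin n)) (l : ℝ) :
    Set (EuclideanSpace ℝ (Fin n)) :=
  {y | ∀ i, |y i - x i| ≤ l / 2}

/-!
Split `Q_{N+1} \ Q` into the annuli `Q_{j+1} \ Q_j`, `0 ≤ j ≤ N`. On the `j`-th annulus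
`|x - x_Q|^{-k} ≤ (ℓ(Q_j)/2)^{-k} = 2^k (c_n α)^{k(N-j)} ℓ(Q_N)^{-k}`, while the failure of
doubling for `Q_{j+1}, …, Q_{N-1}` together with the doubling of `Q_N` gives
`β^{N-j} μ(Q_{j+1}) ≤ β μ(Q_N)`. The annuli therefore contribute a geometric series of ratio
`(c_n α)^k / β < 1` times `μ(Q_N)/ℓ(Q_N)^k`, and this ratio is at most `c_μ √n^k` because `Q_N`
lies in the ball of radius `√n ℓ(Q_N)` around `x_Q`.
-/
open scoped ENNReal

section Cube

variable {n : ℕ}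

lemma half_lt_dist_of_notMem_ccube {x c : EuclideanSpace ℝ (Fin n)} {s : ℝ}
    (hx : x ∉ ccube c s) : s / 2 < dist x c := by
  obtain ⟨i, hi⟩ := not_forall.mp hx
  rw [← Real.dist_eq] at hi
  exact (not_le.mp hi).trans_le (PiLp.dist_apply_le x c i)

lemma ccube_subset_closedBall (c : EuclideanSpace ℝ (Fin n)) {s : ℝ} (hs : 0 ≤ s) :
    ccube c s ⊆ Metric.closedBall c (Real.sqrt n * (s / 2)) := by
  intro x hx
  rw [Metric.mem_closedBall, EuclideanSpace.dist_eq, ← Real.sqrt_sq (by positivity : 0 ≤ s / 2),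
    ← Real.sqrt_mul (Nat.cast_nonneg n)]
  refine Real.sqrt_le_sqrt ?_
  calc ∑ i, dist (x i) (c i) ^ 2 ≤ ∑ _i : Fin n, (s / 2) ^ 2 :=
        Finset.sum_le_sum fun i _ => pow_le_pow_left₀ dist_nonneg (hx i) 2
    _ = n * (s / 2) ^ 2 := by simp

lemma measure_ccube_div_le {μ : Measure (EuclideanSpace ℝ (Fin n))} {cμ k : ℝ}
    (hμ : ∀ x r, 0 < r → μ (Metric.ball x r) ≤ ENNReal.ofReal (cμ * r ^ k))
    (hn : 0 < n) (hcμ : 0 ≤ cμ) (c : EuclideanSpace ℝ (Fin n)) {s : ℝ} (hs : 0 < s) :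
    μ (ccube c s) / ENNReal.ofReal (s ^ k) ≤ ENNReal.ofReal (cμ * Real.sqrt n ^ k) := by
  have hr : 0 < Real.sqrt n * s := by positivity
  have hsub : ccube c s ⊆ Metric.ball c (Real.sqrt n * s) :=
    (ccube_subset_closedBall c hs.le).trans (Metric.closedBall_subset_ball (by linarith))
  rw [ENNReal.div_le_iff_le_mul (Or.inl (by simp [Real.rpow_pos_of_pos hs]))
    (Or.inl ENNReal.ofReal_ne_top), ← ENNReal.ofReal_mul (by positivity),
    mul_assoc, ← Real.mul_rpow (Real.sqrt_nonneg n) hs.le]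
  exact (measure_mono hsub).trans (hμ c _ hr)

lemma setLIntegral_ccube_diff_le (μ : Measure (EuclideanSpace ℝ (Fin n)))
    (c : EuclideanSpace ℝ (Fin n)) {a b k : ℝ} (ha : 0 < a) (hk : 0 ≤ k) :
    ∫⁻ x in ccube c b \ ccube c a, ENNReal.ofReal (dist x c ^ (-k)) ∂μ ≤
      ENNReal.ofReal ((a / 2) ^ (-k)) * μ (ccube c b) := by
  calc ∫⁻ x in ccube c b \ ccube c a, ENNReal.ofReal (dist x c ^ (-k)) ∂μ
      ≤ ∫⁻ _ in ccube c b \ ccube c a, ENNReal.ofReal ((a / 2) ^ (-k)) ∂μ :=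
        setLIntegral_mono measurable_const fun x hx => ENNReal.ofReal_le_ofReal <|
          Real.rpow_le_rpow_of_nonpos (by positivity)
            (half_lt_dist_of_notMem_ccube hx.2).le (by linarith)
    _ ≤ ENNReal.ofReal ((a / 2) ^ (-k)) * μ (ccube c b) := by
        rw [setLIntegral_const]
        exact mul_le_mul_right (measure_mono Set.sdiff_subset) _

end Cube

lemma Set.diff_subset_biUnion_range_diff {α : Type*} (s : ℕ → Set α) (N : ℕ) :
    s N \ s 0 ⊆ ⋃ j ∈ Finset.range N, s (j + 1) \ s j := by
  classical
  rintro x ⟨hN, h0⟩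
  have hex : ∃ j, x ∈ s j := ⟨N, hN⟩
  have hpos : Nat.find hex ≠ 0 := fun h => h0 (h ▸ Nat.find_spec hex)
  refine Set.mem_biUnion (x := Nat.find hex - 1) ?_ ⟨?_, Nat.find_min hex (by omega)⟩
  · simpa using (Nat.find_min' hex hN).trans_lt' (by omega)
  · simpa [Nat.sub_add_cancel (Nat.one_le_iff_ne_zero.mpr hpos)] using Nat.find_spec hex

lemma MeasureTheory.setLIntegral_biUnion_finset_le {α ι : Type*} [MeasurableSpace α]
    {μ : Measure α} (s : Finset ι) (t : ι → Set α) (f : α → ℝ≥0∞) :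
    ∫⁻ x in ⋃ i ∈ s, t i, f x ∂μ ≤ ∑ i ∈ s, ∫⁻ x in t i, f x ∂μ := by
  rw [← Finset.set_biUnion_coe, Set.biUnion_eq_iUnion, ← Finset.tsum_subtype]
  exact lintegral_iUnion_le _ _

lemma pow_sub_mul_le_of_chain {m : ℕ → ℝ≥0∞} {c : ℝ≥0∞} {N : ℕ}
    (hchain : ∀ j, 1 ≤ j → j < N → c * m j ≤ m (j + 1)) {j : ℕ} (hj : 1 ≤ j) (hjN : j ≤ N) :
    c ^ (N - j) * m j ≤ m N := by
  induction h : N - j generalizing j with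
  | zero => simp [show j = N by omega]
  | succ d ih =>
    calc c ^ (d + 1) * m j = c ^ d * (c * m j) := by ring
      _ ≤ c ^ d * m (j + 1) := mul_le_mul_right (hchain j hj (by omega)) _
      _ ≤ m N := ih (by omega) (by omega) (by omega)

lemma pow_sub_mul_succ_le_of_chain {m : ℕ → ℝ≥0∞} {c : ℝ≥0∞} {N : ℕ}
    (hchain : ∀ j, 1 ≤ j → j < N → c * m j ≤ m (j + 1)) (hN : m (N + 1) ≤ c * m N)
    {j : ℕ} (hj : j ≤ N) : c ^ (N - j) * m (j + 1) ≤ c * m N := by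
  rcases hj.eq_or_lt with rfl | hj
  · simpa using hN
  · calc c ^ (N - j) * m (j + 1) = c * (c ^ (N - (j + 1)) * m (j + 1)) := by
          rw [← mul_assoc, ← pow_succ', show N - (j + 1) + 1 = N - j by omega]
      _ ≤ c * m N := mul_le_mul_right (pow_sub_mul_le_of_chain hchain (by omega) hj) _

lemma rpow_neg_half_pow_mul_eq {A l k : ℝ} (hA : 0 < A) (hl : 0 < l) {j N : ℕ} (hj : j ≤ N) :
    (A ^ j * l / 2) ^ (-k) = 2 ^ k / (A ^ N * l) ^ k * (A ^ k) ^ (N - j) := by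
  have hN : A ^ N * l = A ^ (N - j) * (A ^ j * l) := by
    rw [← mul_assoc, ← pow_add, Nat.sub_add_cancel hj]
  rw [hN, Real.mul_rpow (by positivity) (by positivity), ← Real.rpow_natCast_mul hA.le,
    mul_comm _ k, Real.rpow_mul_natCast hA.le, Real.rpow_neg (by positivity),
    Real.div_rpow (by positivity) zero_le_two]
  field_simp

lemma sum_range_pow_sub_le {ρ : ℝ} (h0 : 0 ≤ ρ) (h1 : ρ < 1) (N : ℕ) :
    ∑ j ∈ Finset.range (N + 1), ρ ^ (N - j) ≤ (1 - ρ)⁻¹ := by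
  have := Finset.sum_range_reflect (fun j => ρ ^ j) (N + 1)
  simp only [add_tsub_cancel_right] at this
  rw [this, Finset.range_eq_Ico]
  simpa using geom_sum_Ico_le_of_lt_one (m := 0) (n := N + 1) h0 h1

lemma ofReal_rpow_neg_mul_le_of_chain {m : ℕ → ℝ≥0∞} {A l k β : ℝ} (hA : 0 < A) (hl : 0 < l)
    (hβ : 0 < β) {N : ℕ}
    (hchain : ∀ j, 1 ≤ j → j < N → ENNReal.ofReal β * m j ≤ m (j + 1))
    (hN : m (N + 1) ≤ ENNReal.ofReal β * m N) {j : ℕ} (hj : j ≤ N) :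
    ENNReal.ofReal ((A ^ j * l / 2) ^ (-k)) * m (j + 1) ≤
      ENNReal.ofReal (2 ^ k * β / (A ^ N * l) ^ k * (A ^ k / β) ^ (N - j)) * m N := by
  have hpow : (A ^ k) ^ (N - j) = (A ^ k / β) ^ (N - j) * β ^ (N - j) := by
    rw [← mul_pow, div_mul_cancel₀ _ hβ.ne']
  calc ENNReal.ofReal ((A ^ j * l / 2) ^ (-k)) * m (j + 1)
      = ENNReal.ofReal (2 ^ k / (A ^ N * l) ^ k * (A ^ k / β) ^ (N - j)) *
          (ENNReal.ofReal β ^ (N - j) * m (j + 1)) := by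
        rw [rpow_neg_half_pow_mul_eq hA hl hj, hpow, ← mul_assoc,
          ENNReal.ofReal_mul (by positivity), ENNReal.ofReal_pow hβ.le, mul_assoc]
    _ ≤ ENNReal.ofReal (2 ^ k / (A ^ N * l) ^ k * (A ^ k / β) ^ (N - j)) *
          (ENNReal.ofReal β * m N) :=
        mul_le_mul_right (pow_sub_mul_succ_le_of_chain hchain hN hj) _
    _ = ENNReal.ofReal (2 ^ k * β / (A ^ N * l) ^ k * (A ^ k / β) ^ (N - j)) * m N := by
        rw [← mul_assoc, ← ENNReal.ofReal_mul (by positivity)]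
        ring_nf

lemma lintegral_ccube_dilate_diff_le {n : ℕ} (μ : Measure (EuclideanSpace ℝ (Fin n)))
    (c : EuclideanSpace ℝ (Fin n)) {A l k β : ℝ} (hA : 0 < A) (hl : 0 < l) (hk : 0 ≤ k)
    (hβ : A ^ k < β) {N : ℕ}
    (hchain : ∀ j, 1 ≤ j → j < N →
      ENNReal.ofReal β * μ (ccube c (A ^ j * l)) ≤ μ (ccube c (A ^ (j + 1) * l)))
    (hN : μ (ccube c (A ^ (N + 1) * l)) ≤ ENNReal.ofReal β * μ (ccube c (A ^ N * l))) :
    ∫⁻ x in ccube c (A ^ (N + 1) * l) \ ccube c l, ENNReal.ofReal (dist x c ^ (-k)) ∂μ ≤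
      ENNReal.ofReal (2 ^ k * β / (1 - A ^ k / β)) *
        (μ (ccube c (A ^ N * l)) / ENNReal.ofReal ((A ^ N * l) ^ k)) := by
  set Q : ℕ → Set (EuclideanSpace ℝ (Fin n)) := fun j => ccube c (A ^ j * l) with hQ
  set L := A ^ N * l
  set ρ := A ^ k / β
  have hβ0 : 0 < β := (Real.rpow_pos_of_pos hA k).trans hβ
  have hρ1 : ρ < 1 := (div_lt_one hβ0).2 hβ
  have hL : 0 < L ^ k := Real.rpow_pos_of_pos (by positivity) k
  have hcover : Q (N + 1) \ ccube c l ⊆ ⋃ j ∈ Finset.range (N + 1), Q (j + 1) \ Q j := by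
    simpa [hQ] using Set.diff_subset_biUnion_range_diff Q (N + 1)
  calc ∫⁻ x in Q (N + 1) \ ccube c l, ENNReal.ofReal (dist x c ^ (-k)) ∂μ
      ≤ ∑ j ∈ Finset.range (N + 1), ∫⁻ x in Q (j + 1) \ Q j, ENNReal.ofReal (dist x c ^ (-k)) ∂μ :=
        (lintegral_mono_set hcover).trans (setLIntegral_biUnion_finset_le _ _ _)
    _ ≤ ∑ j ∈ Finset.range (N + 1), ENNReal.ofReal ((A ^ j * l / 2) ^ (-k)) * μ (Q (j + 1)) :=
        Finset.sum_le_sum fun j _ => setLIntegral_ccube_diff_le μ c (by positivity) hk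
    _ ≤ ∑ j ∈ Finset.range (N + 1), ENNReal.ofReal (2 ^ k * β / L ^ k * ρ ^ (N - j)) * μ (Q N) :=
        Finset.sum_le_sum fun j hj => ofReal_rpow_neg_mul_le_of_chain (m := fun j => μ (Q j))
          hA hl hβ0 hchain hN (Finset.mem_range_succ_iff.mp hj)
    _ = ENNReal.ofReal (2 ^ k * β / L ^ k * ∑ j ∈ Finset.range (N + 1), ρ ^ (N - j)) *
          μ (Q N) := by
        rw [← Finset.sum_mul, Finset.mul_sum,
          ENNReal.ofReal_sum_of_nonneg fun j _ => by positivity]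
    _ ≤ ENNReal.ofReal (2 ^ k * β / L ^ k * (1 - ρ)⁻¹) * μ (Q N) := by
        gcongr
        exact sum_range_pow_sub_le (by positivity) hρ1 N
    _ = ENNReal.ofReal (2 ^ k * β / (1 - ρ)) * (μ (Q N) / ENNReal.ofReal (L ^ k)) := by
        rw [ENNReal.div_eq_inv_mul, ← ENNReal.ofReal_inv_of_pos hL, ← mul_assoc,
          ← ENNReal.ofReal_mul (by have := sub_pos.2 hρ1; positivity)]
        congr 2
        field_simp

lemma cN_pos {n : ℕ} (hn : 0 < n) : 0 < cN n := by
  have hp : 0 < pn n := by unfold pn; split <;> omega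
  have hs : 0 < Real.sqrt n := Real.sqrt_pos.2 (Nat.cast_pos.2 hn)
  unfold cN
  positivity

/-- Remark 2: if `Q_j = (c_n α)^j Q` are the concentric dilates of a cube `Q`
of center `x_Q` and side `l`, the cubes `Q_j`, `1 ≤ j < N`, are not
`(c_n α, β)`-doubling and `Q_N` is, then
`∫_{Q_{N+1} \ Q} |x - x_Q|^{-k} dμ ≲ μ(Q_N)/ℓ(Q_N)^k ≲ 1`, with constants
depending only on `n`, `k`, `c_n`, `α`, `β`, `c_μ`. -/
theorem stmt_11 (n : ℕ) (k cμ α β : ℝ) (hk : 0 < k) (hkn : k ≤ n)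
    (hα : 3 < α) (hβ : (cN n * α) ^ k < β) (hcμ : 0 < cμ) :
    ∃ C : ℝ, 0 < C ∧
      ∀ (μ : Measure (EuclideanSpace ℝ (Fin n))),
        (∀ (x : EuclideanSpace ℝ (Fin n)) (r : ℝ), 0 < r →
          μ (Metric.ball x r) ≤ ENNReal.ofReal (cμ * r ^ k)) →
        ∀ (xQ : EuclideanSpace ℝ (Fin n)) (l : ℝ), 0 < l → ∀ N : ℕ, 1 ≤ N →
          (∀ j : ℕ, 1 ≤ j → j < N →
            ENNReal.ofReal β * μ (ccube xQ ((cN n * α) ^ j * l)) <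
              μ (ccube xQ ((cN n * α) ^ (j + 1) * l))) →
          μ (ccube xQ ((cN n * α) ^ (N + 1) * l)) ≤
            ENNReal.ofReal β * μ (ccube xQ ((cN n * α) ^ N * l)) →
          (∫⁻ x in ccube xQ ((cN n * α) ^ (N + 1) * l) \ ccube xQ l,
              ENNReal.ofReal (dist x xQ ^ (-k)) ∂μ) ≤
            ENNReal.ofReal C *
              (μ (ccube xQ ((cN n * α) ^ N * l)) /
                ENNReal.ofReal (((cN n * α) ^ N * l) ^ k)) ∧
          (∫⁻ x in ccube xQ ((cN n * α) ^ (N + 1) * l) \ ccube xQ l,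
              ENNReal.ofReal (dist x xQ ^ (-k)) ∂μ) ≤ ENNReal.ofReal C := by
  have hn : 0 < n := Nat.cast_pos.mp (hk.trans_le hkn)
  have hA : 0 < cN n * α := mul_pos (cN_pos hn) (by linarith)
  have hC₁ : 0 < 2 ^ k * β / (1 - (cN n * α) ^ k / β) := by
    have hβ0 : 0 < β := (Real.rpow_pos_of_pos hA k).trans hβ
    have : (cN n * α) ^ k / β < 1 := (div_lt_one hβ0).2 hβ
    have := sub_pos.2 this
    positivity
  have hgrowth : 0 < cμ * Real.sqrt n ^ k := by positivity
  refine ⟨2 ^ k * β / (1 - (cN n * α) ^ k / β) * (1 + cμ * Real.sqrt n ^ k), by positivity, ?_⟩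
  intro μ hμ xQ l hl N _ hchain hN
  have hmain := lintegral_ccube_dilate_diff_le μ xQ hA hl hk.le hβ
    (fun j h1 h2 => (hchain j h1 h2).le) hN
  refine ⟨hmain.trans ?_, hmain.trans ?_⟩
  · gcongr
    nlinarith
  · calc _ ≤ ENNReal.ofReal (2 ^ k * β / (1 - (cN n * α) ^ k / β)) *
          ENNReal.ofReal (cμ * Real.sqrt n ^ k) := by
          gcongr
          exact measure_ccube_div_le hμ hn hcμ.le xQ (by positivity)
      _ ≤ _ := by
          rw [← ENNReal.ofReal_mul hC₁.le]
          gcongr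
          nlinarith
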